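/- arXiv:1201.3288 — 2 statements merged into one kernel-verified Lean document; each statement's English description precedes it below -/
import Mathlib

section
/- With notation as above, for each 1 ≤ j ≤ m−1 the number k_j* := min{k : c_k ≠ 0, m ∤ kj} equals β_{r(j)}, where r(j) = min{l : m ∤ jβ_l}. -/
/-! Along the chain `e l = gcd (e (l - 1)) (β l)` from `e 0 = m`, the divisibility `m ∣ j * e l`
survives every step `l < r`, since there `m ∣ j * β l` as well. So `m ∣ j * e (r - 1)`, and any `k`
with `m ∤ k j` is not a multiple of `e (r - 1)`, whence `β r ≤ k*`. Conversely `m ∤ j β r`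
gives `k* ≤ β r`. -/

theorem dvd_mul_of_forall_dvd_mul_of_gcd_chain {m j n : ℕ} {β e : ℕ → ℕ} (he0 : e 0 = m)
    (he : ∀ l, 1 ≤ l → l ≤ n → e l = Nat.gcd (e (l - 1)) (β l))
    (hβ : ∀ l, 1 ≤ l → l ≤ n → m ∣ j * β l) :
    m ∣ j * e n := by
  induction n with
  | zero => exact he0 ▸ dvd_mul_left m j
  | succ n ih =>
    have hprev : m ∣ j * e n :=
      ih (fun l h1 h2 => he l h1 (by omega)) (fun l h1 h2 => hβ l h1 (by omega))
    rw [he (n + 1) (by omega) le_rfl, Nat.add_sub_cancel, ← Nat.gcd_mul_left]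
    exact Nat.dvd_gcd hprev (hβ (n + 1) (by omega) le_rfl)

theorem kstar_eq_beta_r_general (m M j r kstar : ℕ) (c : ℕ → ℂ) (β e : ℕ → ℕ)
    (he0 : e 0 = m)
    (hβ : ∀ l, 1 ≤ l → l ≤ M → IsLeast {k | c k ≠ 0 ∧ ¬ e (l - 1) ∣ k} (β l))
    (he : ∀ l, 1 ≤ l → l ≤ M → e l = Nat.gcd (e (l - 1)) (β l))
    (hr : IsLeast {l | 1 ≤ l ∧ l ≤ M ∧ ¬ m ∣ j * β l} r)
    (hk : IsLeast {k | c k ≠ 0 ∧ ¬ m ∣ k * j} kstar) :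
    kstar = β r := by
  obtain ⟨⟨hr1, hrM, hmβr⟩, hrmin⟩ := hr
  obtain ⟨⟨hck, hmk⟩, hkmin⟩ := hk
  obtain ⟨⟨hcβr, -⟩, hβrmin⟩ := hβ r hr1 hrM
  have hm_dvd : m ∣ j * e (r - 1) := by
    refine dvd_mul_of_forall_dvd_mul_of_gcd_chain he0 (fun l h1 h2 => he l h1 (by omega)) ?_
    intro l h1 h2
    by_contra hl
    have := hrmin ⟨h1, by omega, hl⟩
    omega
  have he_ndvd : ¬ e (r - 1) ∣ kstar := fun hd =>
    hmk (hm_dvd.trans (mul_comm kstar j ▸ mul_dvd_mul_left j hd))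
  exact le_antisymm (hkmin ⟨hcβr, mul_comm (β r) j ▸ hmβr⟩) (hβrmin ⟨hck, he_ndvd⟩)

/-- k_j* = min {k : c_k ≠ 0, m ∤ kj} equals β_{r(j)}. -/
theorem kstar_eq_beta_r (m M j r kstar : ℕ) (c : ℕ → ℂ) (β e : ℕ → ℕ)
    (hm : 1 ≤ m) (hc : ∀ k < m, c k = 0) (he0 : e 0 = m)
    (hβ : ∀ l, 1 ≤ l → l ≤ M → IsLeast {k | c k ≠ 0 ∧ ¬ e (l - 1) ∣ k} (β l))
    (he : ∀ l, 1 ≤ l → l ≤ M → e l = Nat.gcd (e (l - 1)) (β l))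
    (heM : e M = 1)
    (hj : 1 ≤ j) (hjm : j ≤ m - 1)
    (hr : IsLeast {l | 1 ≤ l ∧ l ≤ M ∧ ¬ m ∣ j * β l} r)
    (hk : IsLeast {k | c k ≠ 0 ∧ ¬ m ∣ k * j} kstar) :
    kstar = β r :=
  kstar_eq_beta_r_general m M j r kstar c β e he0 hβ he hr hk
end

section
/- The order of vanishing at t = 0 of Π*(P'_w) = Π_{j=1}^{m−1} (g(t) − g(ρ^j t)) equals Σ_{l=1}^{M} (e_{l−1} − e_l)·β_l. -/
/-!
The `j`-th factor has coefficients `c k * (1 - ρ ^ (j * k))`, so its order is the least `k` with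
`c k ≠ 0` and `m ∤ j * k`. Since `e` decreases along divisibility from `e 0 = m` to `e M = 1`,
there is exactly one `l` with `m ∣ j * e (l - 1)` and `m ∤ j * e l`, and for it that least `k` is
`β l`, because `e l = gcd (e (l - 1)) (β l)`. As `m ∣ j * e` iff `m / e ∣ j`, exactly
`e (l - 1) - e l` of the `j ∈ [1, m - 1]` give the index `l`.
-/
open PowerSeries Finset

theorem order_mk_sub_mk_mul_eq {R : Type*} [Ring R] [NoZeroDivisors R] {c u : ℕ → R} {n : ℕ}
    (h : IsLeast {k | c k ≠ 0 ∧ u k ≠ 1} n) :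
    (mk c - mk fun k => c k * u k).order = n := by
  have hcoeff : ∀ k, coeff k (mk c - mk fun k => c k * u k) = c k * (1 - u k) := by
    intro k
    simp [mul_sub]
  rw [order_eq_nat, hcoeff]
  refine ⟨mul_ne_zero h.1.1 (sub_ne_zero.2 (Ne.symm h.1.2)), fun i hi => ?_⟩
  rw [hcoeff]
  by_contra hne
  obtain ⟨hc, hu⟩ := mul_ne_zero_iff.1 hne
  exact (h.2 ⟨hc, fun h1 => hu (by rw [h1, sub_self])⟩).not_gt hi

theorem exists_mem_Icc_and_not_of_not {p : ℕ → Prop} {n : ℕ} (h0 : p 0) (hn : ¬ p n) :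
    ∃ l ∈ Icc 1 n, p (l - 1) ∧ ¬ p l := by
  induction n with
  | zero => exact absurd h0 hn
  | succ n ih =>
    by_cases hp : p n
    · exact ⟨n + 1, by simp, hp, hn⟩
    · obtain ⟨l, hl, hpl⟩ := ih hp
      exact ⟨l, Icc_subset_Icc_right n.le_succ hl, hpl⟩

theorem card_filter_dvd_mul_Icc {m e : ℕ} (hm : 0 < m) (he : e ∣ m) :
    #{j ∈ Icc 1 (m - 1) | m ∣ j * e} = e - 1 := by
  obtain ⟨d, rfl⟩ := he
  have hd : 0 < d := Nat.pos_of_mul_pos_left hm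
  have he : 0 < e := Nat.pos_of_mul_pos_right hm
  have hdvd : ∀ j, e * d ∣ j * e ↔ d ∣ j := fun j => by
    rw [mul_comm j, Nat.mul_dvd_mul_iff_left he]
  simp_rw [hdvd, show Icc 1 (e * d - 1) = Ioc 0 (e * d - 1) from Icc_add_one_left_eq_Ioc 0 _,
    Nat.Ioc_filter_dvd_card_eq_div]
  apply Nat.div_eq_of_lt_le
  · rw [Nat.sub_one_mul]
    omega
  · rw [Nat.sub_add_cancel he]
    omega

namespace PuiseuxCharacteristic

variable {M : ℕ} {β e : ℕ → ℕ}

theorem e_dvd_e_of_le (he : ∀ l, 1 ≤ l → l ≤ M → e l = Nat.gcd (e (l - 1)) (β l))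
    {a b : ℕ} (hab : a ≤ b) (hb : b ≤ M) : e b ∣ e a := by
  induction b, hab using Nat.le_induction with
  | base => rfl
  | succ b hab ih =>
    rw [he (b + 1) (by omega) hb, Nat.add_sub_cancel]
    exact (Nat.gcd_dvd_left _ _).trans (ih (by omega))

theorem le_of_dvd_mul_e_of_not_dvd_mul_e
    (he : ∀ l, 1 ≤ l → l ≤ M → e l = Nat.gcd (e (l - 1)) (β l)) {n j a b : ℕ}
    (hb : b ∈ Icc 1 M) (hdvd : n ∣ j * e (b - 1)) (hndvd : ¬ n ∣ j * e a) : b ≤ a := by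
  rw [mem_Icc] at hb
  by_contra! hlt
  exact hndvd (hdvd.trans (mul_dvd_mul_left j (e_dvd_e_of_le he (by omega) (by omega))))

theorem isLeast_of_dvd_mul_e_of_not_dvd_mul_e {R : Type*} [Zero R] {c : ℕ → R}
    (hβ : ∀ l, 1 ≤ l → l ≤ M → IsLeast {k | c k ≠ 0 ∧ ¬ e (l - 1) ∣ k} (β l))
    (he : ∀ l, 1 ≤ l → l ≤ M → e l = Nat.gcd (e (l - 1)) (β l)) {n j l : ℕ}
    (hl : l ∈ Icc 1 M) (hdvd : n ∣ j * e (l - 1)) (hndvd : ¬ n ∣ j * e l) :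
    IsLeast {k | c k ≠ 0 ∧ ¬ n ∣ j * k} (β l) := by
  rw [mem_Icc] at hl
  obtain ⟨⟨hcβ, -⟩, hmin⟩ := hβ l hl.1 hl.2
  refine ⟨⟨hcβ, fun hβdvd => hndvd ?_⟩, fun k ⟨hck, hk⟩ => ?_⟩
  · rw [he l hl.1 hl.2, ← Nat.gcd_mul_left]
    exact Nat.dvd_gcd hdvd hβdvd
  · by_contra! hlt
    have hek : e (l - 1) ∣ k := by
      by_contra hek
      exact (hmin ⟨hck, hek⟩).not_gt hlt
    exact hk (hdvd.trans (mul_dvd_mul_left j hek))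

theorem card_filter_dvd_mul_e_and_not_dvd_mul_e {m : ℕ} (hm : 0 < m) (he0 : e 0 = m)
    (he : ∀ l, 1 ≤ l → l ≤ M → e l = Nat.gcd (e (l - 1)) (β l)) {l : ℕ} (hl : l ∈ Icc 1 M) :
    #{j ∈ Icc 1 (m - 1) | m ∣ j * e (l - 1) ∧ ¬ m ∣ j * e l} = e (l - 1) - e l := by
  rw [mem_Icc] at hl
  have he_dvd_m : ∀ a ≤ M, e a ∣ m := fun a ha => he0 ▸ e_dvd_e_of_le he a.zero_le ha
  have hstep : e l ∣ e (l - 1) := e_dvd_e_of_le he (by omega) hl.2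
  have hsub : {j ∈ Icc 1 (m - 1) | m ∣ j * e l} ⊆ {j ∈ Icc 1 (m - 1) | m ∣ j * e (l - 1)} :=
    fun j => by
      simp only [mem_filter]
      exact And.imp_right fun hj => hj.trans (mul_dvd_mul_left j hstep)
  have hsdiff : {j ∈ Icc 1 (m - 1) | m ∣ j * e (l - 1) ∧ ¬ m ∣ j * e l}
      = {j ∈ Icc 1 (m - 1) | m ∣ j * e (l - 1)} \ {j ∈ Icc 1 (m - 1) | m ∣ j * e l} := by
    ext j
    simp only [mem_filter, mem_sdiff]
    tauto
  rw [hsdiff, card_sdiff_of_subset hsub, card_filter_dvd_mul_Icc hm (he_dvd_m _ (by omega)),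
    card_filter_dvd_mul_Icc hm (he_dvd_m _ hl.2)]
  have hpos : 0 < e l := Nat.pos_of_dvd_of_pos (he_dvd_m _ hl.2) hm
  have hle : e l ≤ e (l - 1) :=
    Nat.le_of_dvd (Nat.pos_of_dvd_of_pos (he_dvd_m _ (by omega)) hm) hstep
  omega

theorem order_sub_mk_mul_pow_eq {K : Type*} [CommRing K] [NoZeroDivisors K] {m j l : ℕ}
    {c : ℕ → K} {ρ : K} (hρ : IsPrimitiveRoot ρ m)
    (hβ : ∀ l, 1 ≤ l → l ≤ M → IsLeast {k | c k ≠ 0 ∧ ¬ e (l - 1) ∣ k} (β l))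
    (he : ∀ l, 1 ≤ l → l ≤ M → e l = Nat.gcd (e (l - 1)) (β l))
    (hl : l ∈ Icc 1 M) (hdvd : m ∣ j * e (l - 1)) (hndvd : ¬ m ∣ j * e l) :
    (mk c - mk fun k => c k * ρ ^ (j * k)).order = β l :=
  order_mk_sub_mk_mul_eq <| by
    simpa only [Ne, hρ.pow_eq_one_iff_dvd] using
      isLeast_of_dvd_mul_e_of_not_dvd_mul_e hβ he hl hdvd hndvd

theorem order_sub_mk_mul_pow_eq_sum_ite {K : Type*} [CommRing K] [NoZeroDivisors K] {m j : ℕ}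
    {c : ℕ → K} {ρ : K} (hρ : IsPrimitiveRoot ρ m) (he0 : e 0 = m) (heM : e M = 1)
    (hβ : ∀ l, 1 ≤ l → l ≤ M → IsLeast {k | c k ≠ 0 ∧ ¬ e (l - 1) ∣ k} (β l))
    (he : ∀ l, 1 ≤ l → l ≤ M → e l = Nat.gcd (e (l - 1)) (β l)) (hj : j ∈ Icc 1 (m - 1)) :
    (mk c - mk fun k => c k * ρ ^ (j * k)).order
      = ((∑ l ∈ Icc 1 M, if m ∣ j * e (l - 1) ∧ ¬ m ∣ j * e l then β l else 0 : ℕ) : ℕ∞) := by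
  rw [mem_Icc] at hj
  have hndvd_j : ¬ m ∣ j * e M := by
    rw [heM, mul_one]
    exact Nat.not_dvd_of_pos_of_lt (by omega) (by omega)
  obtain ⟨l, hl, hdvd, hndvd⟩ :=
    exists_mem_Icc_and_not_of_not (p := fun a => m ∣ j * e a) (he0 ▸ dvd_mul_left m j) hndvd_j
  have hunique : ∀ b ∈ Icc 1 M, b ≠ l → ¬ (m ∣ j * e (b - 1) ∧ ¬ m ∣ j * e b) :=
    fun b hb hne ⟨hbdvd, hbndvd⟩ => hne <| le_antisymm
      (le_of_dvd_mul_e_of_not_dvd_mul_e he hb hbdvd hndvd)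
      (le_of_dvd_mul_e_of_not_dvd_mul_e he hl hdvd hbndvd)
  rw [sum_eq_single_of_mem l hl fun b hb hne => if_neg (hunique b hb hne),
    if_pos ⟨hdvd, hndvd⟩, order_sub_mk_mul_pow_eq hρ hβ he hl hdvd hndvd]

end PuiseuxCharacteristic

open PuiseuxCharacteristic

theorem order_pullback_Pw_general (m M : ℕ) (c : ℕ → ℂ) (β e : ℕ → ℕ) (ρ : ℂ)
    (hm : 1 ≤ m) (hρ : IsPrimitiveRoot ρ m)
    (he0 : e 0 = m)
    (hβ : ∀ l, 1 ≤ l → l ≤ M → IsLeast {k | c k ≠ 0 ∧ ¬ e (l - 1) ∣ k} (β l))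
    (he : ∀ l, 1 ≤ l → l ≤ M → e l = Nat.gcd (e (l - 1)) (β l))
    (heM : e M = 1) :
    (∏ j ∈ Finset.Icc 1 (m - 1),
        (PowerSeries.mk c - PowerSeries.mk (fun k => c k * ρ ^ (j * k)) :
          PowerSeries ℂ)).order
      = ((∑ l ∈ Finset.Icc 1 M, (e (l - 1) - e l) * β l : ℕ) : ℕ∞) := by
  rw [order_prod, sum_congr rfl fun j hj => order_sub_mk_mul_pow_eq_sum_ite hρ he0 heM hβ he hj,
    ← Nat.cast_sum, sum_comm]
  congr 1
  refine sum_congr rfl fun l hl => ?_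
  rw [← sum_filter, sum_const, smul_eq_mul, card_filter_dvd_mul_e_and_not_dvd_mul_e hm he0 he hl]

/-- ord_0 of ∏_{j=1}^{m-1} (g(t) - g(ρ^j t)) equals Σ_{l=1}^{M} (e_{l-1} - e_l) β_l. -/
theorem order_pullback_Pw (m M : ℕ) (c : ℕ → ℂ) (β e : ℕ → ℕ) (ρ : ℂ)
    (hm : 1 ≤ m) (hρ : IsPrimitiveRoot ρ m) (hc : ∀ k < m, c k = 0)
    (he0 : e 0 = m)
    (hβ : ∀ l, 1 ≤ l → l ≤ M → IsLeast {k | c k ≠ 0 ∧ ¬ e (l - 1) ∣ k} (β l))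
    (he : ∀ l, 1 ≤ l → l ≤ M → e l = Nat.gcd (e (l - 1)) (β l))
    (heM : e M = 1) :
    (∏ j ∈ Finset.Icc 1 (m - 1),
        (PowerSeries.mk c - PowerSeries.mk (fun k => c k * ρ ^ (j * k)) :
          PowerSeries ℂ)).order
      = ((∑ l ∈ Finset.Icc 1 M, (e (l - 1) - e l) * β l : ℕ) : ℕ∞) :=
  order_pullback_Pw_general m M c β e ρ hm hρ he0 hβ he heM
end
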